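/- arXiv:2010.14070 — 2 statements merged into one kernel-verified Lean document; each statement's English description precedes it below -/
import Mathlib

section
/- Let q ∈ (1,∞), let (X, μ) be a measure space with μ a finite measure, and let a : X → ℝ be a bounded measurable function with a ≥ 0 μ-a.e. and ∫_X a dμ > 0. Then for every u ∈ L^q(X, μ) there exists a unique s ∈ ℝ such that I_a(u + s) = ∫_X a|u + s|^{q−2}(u + s) dμ = 0. -/
open MeasureTheory Real Filter Topology
open scoped ENNReal

/-- `Ia μ a q w = ∫ a |w|^{q-2} w dμ` (with `|t|^{q-2} t = 0` when `t = 0`,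
which holds automatically for the real power since the factor `w x` vanishes). -/
noncomputable def Ia {X : Type*} [MeasurableSpace X] (μ : Measure X) (a : X → ℝ) (q : ℝ)
    (w : X → ℝ) : ℝ :=
  ∫ x, a x * |w x| ^ (q - 2) * w x ∂μ

/-!
With `φ(t) = |t|^{q-2} t` (`dualPow q`), `F(s) = ∫ a φ(u + s) dμ` integrates functions of `s`
that are nondecreasing (as `a ≥ 0`), and strictly increasing with limit `+∞` on `{a > 0}`, a set
of positive measure. Domination by the values at `s₀ ± 1` makes `F` continuous, monotone
convergence makes `F(s) → +∞`, oddness of `φ` gives `F(s) → -∞`, so `F` vanishes somewhere,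
and only once since it is strictly increasing.
-/

noncomputable def dualPow (q t : ℝ) : ℝ := |t| ^ (q - 2) * t

section DualPow

variable {q : ℝ}

theorem dualPow_of_nonneg (hq : 1 < q) {t : ℝ} (ht : 0 ≤ t) : dualPow q t = t ^ (q - 1) := by
  rcases ht.eq_or_lt with rfl | ht
  · simp [dualPow, zero_rpow (by linarith : q - 1 ≠ 0)]
  · rw [dualPow, abs_of_pos ht, ← rpow_add_one ht.ne']
    ring_nf

theorem dualPow_neg (t : ℝ) : dualPow q (-t) = -dualPow q t := by
  simp [dualPow]

theorem abs_dualPow (hq : 1 < q) (t : ℝ) : |dualPow q t| = |t| ^ (q - 1) := by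
  rw [← dualPow_of_nonneg hq (abs_nonneg t), dualPow, dualPow, abs_mul, abs_abs,
    abs_of_nonneg (rpow_nonneg (abs_nonneg t) _)]

theorem strictMono_dualPow (hq : 1 < q) : StrictMono (dualPow q) :=
  strictMono_of_odd_strictMonoOn_nonneg dualPow_neg <| by
    refine (strictMonoOn_rpow_Ici_of_exponent_pos (by linarith : 0 < q - 1)).congr ?_
    exact fun t ht => (dualPow_of_nonneg hq ht).symm

theorem continuous_dualPow (hq : 1 < q) : Continuous (dualPow q) := by
  have hderiv : deriv (fun t : ℝ => ‖t‖ ^ q) = fun t => q * dualPow q t := by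
    ext t
    rw [(hasDerivAt_norm_rpow t hq).deriv, dualPow, norm_eq_abs, mul_assoc]
  have := ((contDiff_norm_rpow (E := ℝ) hq).continuous_deriv le_rfl).const_mul q⁻¹
  rw [hderiv] at this
  simpa [inv_mul_cancel_left₀ (by linarith : q ≠ 0)] using this

theorem tendsto_dualPow_atTop (hq : 1 < q) : Tendsto (dualPow q) atTop atTop :=
  (tendsto_rpow_atTop (by linarith)).congr' <|
    (eventually_ge_atTop 0).mono fun _ ht => (dualPow_of_nonneg hq ht).symm

end DualPow

section MonotoneFamily

variable {X : Type*} [MeasurableSpace X] {μ : Measure X} {f : ℝ → X → ℝ}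

theorem continuous_integral_of_monotone (hf : ∀ s, Integrable (f s) μ)
    (hmono : ∀ᵐ x ∂μ, Monotone (f · x)) (hcont : ∀ᵐ x ∂μ, Continuous (f · x)) :
    Continuous fun s => ∫ x, f s x ∂μ := by
  refine continuous_iff_continuousAt.2 fun s₀ => ?_
  refine continuousAt_of_dominated (bound := fun x => |f (s₀ - 1) x| + |f (s₀ + 1) x|)
    (.of_forall fun s => (hf s).aestronglyMeasurable) ?_ ((hf _).abs.add (hf _).abs)
    (hcont.mono fun x hx => hx.continuousAt)
  filter_upwards [Icc_mem_nhds (sub_one_lt s₀) (lt_add_one s₀)] with s hs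
  filter_upwards [hmono] with x hx
  exact (abs_le_max_abs_abs (hx hs.1) (hx hs.2)).trans
    (max_le_add_of_nonneg (abs_nonneg _) (abs_nonneg _))

theorem strictMono_integral_of_monotone (hf : ∀ s, Integrable (f s) μ)
    (hmono : ∀ᵐ x ∂μ, Monotone (f · x)) {E : Set X} (hE : μ E ≠ 0)
    (hstrict : ∀ x ∈ E, StrictMono (f · x)) :
    StrictMono fun s => ∫ x, f s x ∂μ := by
  intro s t hst
  have hdiff_nonneg : 0 ≤ᵐ[μ] f t - f s := hmono.mono fun x hx => sub_nonneg.2 (hx hst.le)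
  have hdiff : 0 < ∫ x, (f t - f s) x ∂μ := by
    rw [integral_pos_iff_support_of_nonneg_ae hdiff_nonneg ((hf t).sub (hf s))]
    exact (pos_iff_ne_zero.2 hE).trans_le
      (measure_mono fun x hx => sub_ne_zero.2 (hstrict x hx hst).ne')
  rw [integral_sub' (hf t) (hf s)] at hdiff
  exact sub_pos.1 hdiff

/-- If the integrals stayed below `B`, the increments `f n - f 0` would have lower integrals at
most `B - ∫ f 0`, while by monotone convergence these tend to `∫⁻ ⨆ n, (f n - f 0) ≥ ∞ · μ E`. -/
theorem tendsto_integral_atTop_of_monotone (hf : ∀ s, Integrable (f s) μ)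
    (hmono : ∀ᵐ x ∂μ, Monotone (f · x)) {E : Set X} (hE_meas : MeasurableSet E)
    (hE : μ E ≠ 0) (htop : ∀ x ∈ E, Tendsto (f · x) atTop atTop) :
    Tendsto (fun s => ∫ x, f s x ∂μ) atTop atTop := by
  have hF : Monotone fun s => ∫ x, f s x ∂μ := fun s t hst =>
    integral_mono_ae (hf s) (hf t) (hmono.mono fun x hx => hx hst)
  refine tendsto_atTop_atTop_of_monotone hF fun B => ?_
  by_contra! hB
  set g : ℕ → X → ℝ≥0∞ := fun n x => ENNReal.ofReal (f n x - f 0 x)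
  have hg_le : ∀ n, ∫⁻ x, g n x ∂μ ≤ ENNReal.ofReal (B - ∫ x, f 0 x ∂μ) := by
    intro n
    calc ∫⁻ x, g n x ∂μ = ENNReal.ofReal (∫ x, f n x - f 0 x ∂μ) :=
          (ofReal_integral_eq_lintegral_ofReal ((hf n).sub (hf 0))
            (hmono.mono fun x hx => sub_nonneg.2 (hx n.cast_nonneg))).symm
      _ ≤ _ := by
          rw [integral_sub (hf n) (hf 0)]
          exact ENNReal.ofReal_le_ofReal (by linarith [hB n])
  have hg_sup : ∀ x ∈ E, ⨆ n, g n x = ∞ := fun x hx =>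
    top_le_iff.1 <| le_of_tendsto' (ENNReal.tendsto_ofReal_atTop.comp <|
      tendsto_atTop_add_const_right _ _ ((htop x hx).comp tendsto_natCast_atTop_atTop))
      fun n => le_iSup (g · x) n
  have : ∞ * μ E ≤ ENNReal.ofReal (B - ∫ x, f 0 x ∂μ) :=
    calc ∞ * μ E = ∫⁻ x in E, ⨆ n, g n x ∂μ := by
          rw [setLIntegral_congr_fun hE_meas hg_sup, setLIntegral_const]
      _ ≤ ∫⁻ x, ⨆ n, g n x ∂μ := setLIntegral_le_lintegral _ _
      _ = ⨆ n, ∫⁻ x, g n x ∂μ :=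
          lintegral_iSup' (fun n => ((hf n).sub (hf 0)).aemeasurable.ennreal_ofReal)
            (hmono.mono fun x hx n m hnm =>
              ENNReal.ofReal_le_ofReal (sub_le_sub_right (hx (Nat.cast_le.2 hnm)) _))
      _ ≤ _ := iSup_le hg_le
  rw [ENNReal.top_mul hE] at this
  exact ENNReal.ofReal_ne_top (top_le_iff.1 this)

end MonotoneFamily

section Ia

variable {X : Type*} [MeasurableSpace X] {μ : Measure X} {q : ℝ} {a : X → ℝ}

theorem Ia_eq_integral_mul_dualPow (w : X → ℝ) :
    Ia μ a q w = ∫ x, a x * dualPow q (w x) ∂μ := by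
  simp only [Ia, dualPow, mul_assoc]

theorem MeasureTheory.MemLp.integrable_dualPow [IsFiniteMeasure μ] (hq : 1 < q) {w : X → ℝ}
    (hw : MemLp w (ENNReal.ofReal q) μ) : Integrable (fun x => dualPow q (w x)) μ := by
  have hw' : MemLp w (ENNReal.ofReal (q - 1)) μ :=
    hw.mono_exponent (ENNReal.ofReal_le_ofReal (by linarith))
  refine (hw'.integrable_norm_rpow (by simpa using hq) ENNReal.ofReal_ne_top).mono
    ((continuous_dualPow hq).comp_aestronglyMeasurable hw.aestronglyMeasurable)
    (.of_forall fun x => ?_)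
  simp only [ENNReal.toReal_ofReal (by linarith : 0 ≤ q - 1), norm_eq_abs]
  rw [abs_dualPow hq, abs_of_nonneg (rpow_nonneg (abs_nonneg _) _)]

theorem integrable_mul_dualPow [IsFiniteMeasure μ] (hq : 1 < q) (ha_meas : Measurable a)
    (ha_bdd : ∃ C : ℝ, ∀ x, |a x| ≤ C) {w : X → ℝ} (hw : MemLp w (ENNReal.ofReal q) μ) :
    Integrable (fun x => a x * dualPow q (w x)) μ :=
  (hw.integrable_dualPow hq).bdd_mul ha_meas.aestronglyMeasurable
    (.of_forall ha_bdd.choose_spec)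

theorem measure_setOf_pos_ne_zero (ha_nonneg : ∀ᵐ x ∂μ, 0 ≤ a x)
    (ha_pos : 0 < ∫ x, a x ∂μ) : μ {x | 0 < a x} ≠ 0 := by
  have h := (integral_pos_iff_support_of_nonneg_ae ha_nonneg
    (.of_integral_ne_zero ha_pos.ne')).1 ha_pos
  refine (h.trans_le (measure_mono_ae ?_)).ne'
  filter_upwards [ha_nonneg] with x hx hx_supp
  exact hx.lt_of_ne' hx_supp

theorem monotone_mul_dualPow_add (hq : 1 < q) (ha_nonneg : ∀ᵐ x ∂μ, 0 ≤ a x) (u : X → ℝ) :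
    ∀ᵐ x ∂μ, Monotone fun s => a x * dualPow q (u x + s) :=
  ha_nonneg.mono fun x hx =>
    ((strictMono_dualPow hq).monotone.comp (monotone_id.const_add (u x))).const_mul hx

theorem tendsto_integral_mul_dualPow_add_atTop [IsFiniteMeasure μ] (hq : 1 < q)
    (ha_meas : Measurable a) (ha_bdd : ∃ C : ℝ, ∀ x, |a x| ≤ C)
    (ha_nonneg : ∀ᵐ x ∂μ, 0 ≤ a x) (ha_pos : 0 < ∫ x, a x ∂μ) {u : X → ℝ}
    (hu : MemLp u (ENNReal.ofReal q) μ) :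
    Tendsto (fun s => ∫ x, a x * dualPow q (u x + s) ∂μ) atTop atTop :=
  tendsto_integral_atTop_of_monotone
    (fun s => integrable_mul_dualPow hq ha_meas ha_bdd (hu.add (memLp_const s)))
    (monotone_mul_dualPow_add hq ha_nonneg u) (measurableSet_lt measurable_const ha_meas)
    (measure_setOf_pos_ne_zero ha_nonneg ha_pos) fun _ hx =>
      ((tendsto_dualPow_atTop hq).comp
        (tendsto_atTop_add_const_left _ _ tendsto_id)).const_mul_atTop hx

theorem tendsto_integral_mul_dualPow_add_atBot [IsFiniteMeasure μ] (hq : 1 < q)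
    (ha_meas : Measurable a) (ha_bdd : ∃ C : ℝ, ∀ x, |a x| ≤ C)
    (ha_nonneg : ∀ᵐ x ∂μ, 0 ≤ a x) (ha_pos : 0 < ∫ x, a x ∂μ) {u : X → ℝ}
    (hu : MemLp u (ENNReal.ofReal q) μ) :
    Tendsto (fun s => ∫ x, a x * dualPow q (u x + s) ∂μ) atBot atBot := by
  have h := tendsto_neg_atTop_atBot.comp <|
    (tendsto_integral_mul_dualPow_add_atTop hq ha_meas ha_bdd ha_nonneg ha_pos hu.neg).comp
      tendsto_neg_atBot_atTop
  refine h.congr fun s => ?_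
  simp only [Function.comp_apply, Pi.neg_apply, ← integral_neg, ← neg_add, dualPow_neg,
    mul_neg, neg_neg]

end Ia

theorem stmt5 {X : Type*} [MeasurableSpace X] (μ : Measure X) [IsFiniteMeasure μ]
    (q : ℝ) (hq : 1 < q) (a : X → ℝ) (ha_meas : Measurable a)
    (ha_bdd : ∃ C : ℝ, ∀ x, |a x| ≤ C) (ha_nonneg : ∀ᵐ x ∂μ, 0 ≤ a x)
    (ha_pos : 0 < ∫ x, a x ∂μ)
    (u : X → ℝ) (hu : MemLp u (ENNReal.ofReal q) μ) :
    ∃! s : ℝ, Ia μ a q (fun x => u x + s) = 0 := by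
  simp only [Ia_eq_integral_mul_dualPow]
  have hf_int (s : ℝ) : Integrable (fun x => a x * dualPow q (u x + s)) μ :=
    integrable_mul_dualPow hq ha_meas ha_bdd (hu.add (memLp_const s))
  have hf_mono := monotone_mul_dualPow_add hq ha_nonneg u
  have hF_strictMono := strictMono_integral_of_monotone hf_int hf_mono
    (measure_setOf_pos_ne_zero ha_nonneg ha_pos) fun x hx =>
      ((strictMono_dualPow hq).comp (strictMono_id.const_add (u x))).const_mul hx
  have hF_cont := continuous_integral_of_monotone hf_int hf_mono <| .of_forall fun x =>
    continuous_const.mul ((continuous_dualPow hq).comp (continuous_const_add (u x)))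
  obtain ⟨s, hs⟩ := hF_cont.surjective
    (tendsto_integral_mul_dualPow_add_atTop hq ha_meas ha_bdd ha_nonneg ha_pos hu)
    (tendsto_integral_mul_dualPow_add_atBot hq ha_meas ha_bdd ha_nonneg ha_pos hu) 0
  exact ⟨s, hs, fun t ht => hF_strictMono.injective (ht.trans hs.symm)⟩
end

section
/- Let q ∈ (1,∞), let (X, μ) be a measure space with μ a finite measure, and let a : X → ℝ be a bounded measurable function with a ≥ 0 μ-a.e. and ∫_X a dμ > 0. Let u ∈ L^q(X, μ) satisfy I_a(u) = 0, and let v : X → ℝ be a bounded measurable function. For each positive integer n, let s_n be the unique real number with I_a(u + v/n + s_n) = 0. Then the sequence (n·s_n)_{n≥1} is bounded. -/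
open MeasureTheory Real Filter Topology

namespace Real

variable {q : ℝ}

lemma abs_rpow_sub_two_mul_self_of_nonneg (hq : q ≠ 1) {t : ℝ} (ht : 0 ≤ t) :
    |t| ^ (q - 2) * t = t ^ (q - 1) := by
  rcases ht.eq_or_lt with rfl | ht
  · simp [zero_rpow (sub_ne_zero.2 hq)]
  · rw [abs_of_pos ht, ← rpow_add_one ht.ne']
    ring_nf

lemma abs_rpow_sub_two_mul_self_neg (t : ℝ) :
    |-t| ^ (q - 2) * -t = -(|t| ^ (q - 2) * t) := by
  rw [abs_neg, mul_neg]

lemma strictMono_abs_rpow_sub_two_mul_self (hq : 1 < q) :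
    StrictMono fun t : ℝ => |t| ^ (q - 2) * t := by
  have hpos : StrictMonoOn (fun t : ℝ => |t| ^ (q - 2) * t) (Set.Ici 0) :=
    (strictMonoOn_rpow_Ici_of_exponent_pos (by linarith : 0 < q - 1)).congr
      fun t ht => (abs_rpow_sub_two_mul_self_of_nonneg hq.ne' ht).symm
  refine StrictMonoOn.Iic_union_Ici (a := 0) (fun s hs t ht hst => ?_) hpos
  have := hpos (Set.mem_Ici.2 (neg_nonneg.2 ht))
    (Set.mem_Ici.2 (neg_nonneg.2 (hst.le.trans ht))) (neg_lt_neg hst)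
  simp only [abs_rpow_sub_two_mul_self_neg] at this
  linarith

end Real

section Ia

variable {X : Type*} [MeasurableSpace X] {μ : Measure X}

lemma integral_mul_pos_of_pos {f g : X → ℝ} (hf : 0 ≤ᵐ[μ] f) (hf_pos : 0 < ∫ x, f x ∂μ)
    (hg : ∀ x, 0 < g x) (hfg : Integrable (fun x => f x * g x) μ) :
    0 < ∫ x, f x * g x ∂μ := by
  rw [integral_pos_iff_support_of_nonneg_ae hf (.of_integral_ne_zero hf_pos.ne')] at hf_pos
  have hfg_nonneg : 0 ≤ᵐ[μ] fun x => f x * g x := by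
    filter_upwards [hf] with x hx using mul_nonneg hx (hg x).le
  rwa [integral_pos_iff_support_of_nonneg_ae hfg_nonneg hfg, Function.support_mul,
    Function.support_eq_univ fun x => (hg x).ne', Set.inter_univ]

variable [IsFiniteMeasure μ] {q : ℝ} {a w : X → ℝ}

lemma integrable_mul_abs_rpow_sub_two_mul_self (hq : 1 < q) (ha_meas : Measurable a)
    (ha_bdd : ∃ C : ℝ, ∀ x, |a x| ≤ C) (hw : MemLp w (ENNReal.ofReal q) μ) :
    Integrable (fun x => a x * |w x| ^ (q - 2) * w x) μ := by
  obtain ⟨C, hC⟩ := ha_bdd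
  -- `|w|^(q-1)` lies in `L^(q/(q-1)) ⊆ L^1`.
  have hpow : Integrable (fun x => ‖w x‖ ^ (q - 1)) μ := by
    have h := hw.norm_rpow_div (ENNReal.ofReal (q - 1))
    rw [ENNReal.toReal_ofReal (by linarith)] at h
    refine h.integrable ?_
    rw [ENNReal.le_div_iff_mul_le (by simp [hq]) (by simp), one_mul]
    exact ENNReal.ofReal_le_ofReal (by linarith)
  have hmeas : AEMeasurable (fun x => a x * |w x| ^ (q - 2) * w x) μ := by
    have := hw.aestronglyMeasurable.aemeasurable
    fun_prop
  refine (hpow.bdd_mul ha_meas.aestronglyMeasurable (c := C) (ae_of_all _ hC)).mono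
    hmeas.aestronglyMeasurable (ae_of_all _ fun x => le_of_eq ?_)
  have h := abs_rpow_sub_two_mul_self_of_nonneg hq.ne' (abs_nonneg (w x))
  rw [abs_abs] at h
  simp only [norm_mul, norm_eq_abs, abs_abs, abs_rpow_of_nonneg (abs_nonneg _), mul_assoc, h]

lemma Ia_lt_Ia (hq : 1 < q) (ha_meas : Measurable a) (ha_bdd : ∃ C : ℝ, ∀ x, |a x| ≤ C)
    (ha_nonneg : ∀ᵐ x ∂μ, 0 ≤ a x) (ha_pos : 0 < ∫ x, a x ∂μ) {f g : X → ℝ}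
    (hf : MemLp f (ENNReal.ofReal q) μ) (hg : MemLp g (ENNReal.ofReal q) μ)
    (hfg : ∀ x, f x < g x) : Ia μ a q f < Ia μ a q g := by
  have hf' := integrable_mul_abs_rpow_sub_two_mul_self hq ha_meas ha_bdd hf
  have hg' := integrable_mul_abs_rpow_sub_two_mul_self hq ha_meas ha_bdd hg
  have hdiff :
      Integrable (fun x => a x * (|g x| ^ (q - 2) * g x - |f x| ^ (q - 2) * f x)) μ := by
    simpa only [Pi.sub_def, mul_sub, mul_assoc] using hg'.sub hf'
  have key := integral_mul_pos_of_pos ha_nonneg ha_pos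
    (fun x => sub_pos.2 (strictMono_abs_rpow_sub_two_mul_self hq (hfg x))) hdiff
  rw [← sub_pos, Ia, Ia, ← integral_sub hg' hf']
  simpa only [mul_sub, mul_assoc] using key

lemma exists_le_of_Ia_eq (hq : 1 < q) (ha_meas : Measurable a)
    (ha_bdd : ∃ C : ℝ, ∀ x, |a x| ≤ C) (ha_nonneg : ∀ᵐ x ∂μ, 0 ≤ a x)
    (ha_pos : 0 < ∫ x, a x ∂μ) {f g : X → ℝ} (hf : MemLp f (ENNReal.ofReal q) μ)
    (hg : MemLp g (ENNReal.ofReal q) μ) (hfg : Ia μ a q f = Ia μ a q g) : ∃ x, g x ≤ f x := by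
  by_contra! h
  exact (Ia_lt_Ia hq ha_meas ha_bdd ha_nonneg ha_pos hf hg h).ne hfg

end Ia

theorem stmt6 {X : Type*} [MeasurableSpace X] (μ : Measure X) [IsFiniteMeasure μ]
    (q : ℝ) (hq : 1 < q) (a : X → ℝ) (ha_meas : Measurable a)
    (ha_bdd : ∃ C : ℝ, ∀ x, |a x| ≤ C) (ha_nonneg : ∀ᵐ x ∂μ, 0 ≤ a x)
    (ha_pos : 0 < ∫ x, a x ∂μ)
    (u : X → ℝ) (hu : MemLp u (ENNReal.ofReal q) μ) (hu0 : Ia μ a q u = 0)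
    (v : X → ℝ) (hv_meas : Measurable v) (hv_bdd : ∃ C : ℝ, ∀ x, |v x| ≤ C)
    (s : ℕ → ℝ)
    (hs : ∀ n : ℕ, 0 < n → Ia μ a q (fun x => u x + v x / n + s n) = 0) :
    ∃ M : ℝ, ∀ n : ℕ, 0 < n → |(n : ℝ) * s n| ≤ M := by
  obtain ⟨C, hC⟩ := hv_bdd
  have hv : MemLp v (ENNReal.ofReal q) μ :=
    .of_bound hv_meas.aestronglyMeasurable C (ae_of_all _ hC)
  refine ⟨C, fun n hn => ?_⟩
  have hn₀ : (0 : ℝ) < n := Nat.cast_pos.2 hn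
  have hw : MemLp (fun x => u x + v x / n + s n) (ENNReal.ofReal q) μ := by
    simpa only [Pi.add_def, div_eq_mul_inv] using
      (hu.add (hv.mul_const (n : ℝ)⁻¹)).add (memLp_const (s n))
  obtain ⟨x, hx⟩ := exists_le_of_Ia_eq hq ha_meas ha_bdd ha_nonneg ha_pos hu hw
    (hu0.trans (hs n hn).symm)
  obtain ⟨y, hy⟩ := exists_le_of_Ia_eq hq ha_meas ha_bdd ha_nonneg ha_pos hw hu
    ((hs n hn).trans hu0.symm)
  have hscale : ∀ z, (n : ℝ) * (v z / n + s n) = v z + n * s n := fun z => by field_simp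
  have hx' : v x + n * s n ≤ 0 := hscale x ▸ mul_nonpos_of_nonneg_of_nonpos hn₀.le (by linarith)
  have hy' : 0 ≤ v y + n * s n := hscale y ▸ mul_nonneg hn₀.le (by linarith)
  exact abs_le.2 ⟨by linarith [(abs_le.1 (hC y)).2], by linarith [(abs_le.1 (hC x)).1]⟩
end
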